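/- arXiv:1302.1741 — 2 statements merged into one kernel-verified Lean document; each statement's English description precedes it below -/
import Mathlib

section
/- For every real α with 0 < α < 1/2 and every ε > 0, there exists C such that for all integers c ≥ C and all integers k with αc < k < (1−α)c, the angle θ_{k,c} = arccos(x_{k,c}) satisfies |θ_{k,c} − (π − πk/c)| < ε. (In short: θ_{k,c} = π − πk/c + o(1) as c → ∞, uniformly over k in the range αc < k < (1−α)c.) -/
open Real

/-- The `c`-th Legendre polynomial, `P_c(x) = (1/(2^c c!)) (d/dx)^c (x² − 1)^c`,
viewed as a real function. -/
noncomputable def legendreP (c : ℕ) (t : ℝ) : ℝ :=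
  (1 / (2 ^ c * (Nat.factorial c : ℝ))) *
    iteratedDeriv c (fun s : ℝ => (s ^ 2 - 1) ^ c) t

/-- `x : ℕ → ℕ → ℝ` enumerates, for each `c ≥ 1`, the roots of the `c`-th Legendre
polynomial in `(−1, 1)` in increasing order: `x k c` is the `k`-th root
`x_{k,c}` (for `1 ≤ k ≤ c`), these are roots lying in `(−1,1)`, they are strictly
increasing in `k`, and every root of `P_c` in `(−1,1)` occurs among them. -/
def IsLegendreRootSystem (x : ℕ → ℕ → ℝ) : Prop :=
  ∀ c : ℕ, 1 ≤ c →
    (∀ k : ℕ, 1 ≤ k → k ≤ c → x k c ∈ Set.Ioo (-1 : ℝ) 1 ∧ legendreP c (x k c) = 0) ∧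
    (∀ k l : ℕ, 1 ≤ k → k < l → l ≤ c → x k c < x l c) ∧
    (∀ t ∈ Set.Ioo (-1 : ℝ) 1, legendreP c t = 0 → ∃ k : ℕ, 1 ≤ k ∧ k ≤ c ∧ x k c = t)

/-!
Substituting `x = cos θ`, the function `u(θ) = √(sin θ) P_c(cos θ)` satisfies
`u'' + ((c + 1/2)² + 1 / (4 sin² θ)) u = 0` (Legendre's equation in Liouville normal form).
The potential exceeds `(c + 1/2)²`, so Sturm comparison with `sin ((c + 1/2)(θ - a))` puts a zero
of `u` in every closed window of length `π / (c + 1/2)` inside `(0, π)`. Hence consecutive angles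
`π > θ_{1,c} > ⋯ > θ_{c,c} > 0` are never more than `π / (c + 1/2)` apart, which traps `θ_{k,c}`
between `π - k π / (c + 1/2)` and `(c + 1 - k) π / (c + 1/2)`, i.e. within `π / c` of `π - π k / c`.
-/

open Polynomial Set

noncomputable def legendrePoly (c : ℕ) : ℝ[X] :=
  C (1 / (2 ^ c * (c.factorial : ℝ))) * derivative^[c] ((X ^ 2 - 1) ^ c)

theorem iteratedDeriv_polynomial_eval (n : ℕ) (p : ℝ[X]) :
    iteratedDeriv n (fun x => p.eval x) = fun x => (derivative^[n] p).eval x := by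
  rw [iteratedDeriv_eq_iterate]
  exact (Function.Semiconj.iterate_right (f := fun (p : ℝ[X]) x => p.eval x)
    (fun p => funext fun x => (Polynomial.deriv p).symm) n p).symm

theorem legendreP_eq_eval (c : ℕ) (t : ℝ) : legendreP c t = (legendrePoly c).eval t := by
  have : (fun s : ℝ => (s ^ 2 - 1) ^ c) = fun s => ((X ^ 2 - 1 : ℝ[X]) ^ c).eval s := by
    simp
  simp [legendreP, legendrePoly, this, iteratedDeriv_polynomial_eval]

theorem legendrePoly_ode (c : ℕ) :
    (X ^ 2 - 1) * derivative^[2] (legendrePoly c) + 2 * X * derivative (legendrePoly c)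
      = (c * (c + 1) : ℝ[X]) * legendrePoly c := by
  -- `f = (X² - 1)^c` satisfies `(X² - 1) f' = 2c X f`; differentiate this once, then `c` times.
  set f : ℝ[X] := (X ^ 2 - 1) ^ c
  have hf : (X ^ 2 - 1) * derivative f = 2 * (c : ℝ[X]) * X * f := by
    rcases c with _ | c
    · simp [f]
    · simp only [f, derivative_pow, derivative_sub, derivative_X, derivative_one, C_eq_natCast]
      push_cast
      ring
  have hf' : derivative^[2] f * X ^ 2 + 2 • (derivative f * X)
      = derivative^[2] f + (2 * c) • (derivative f * X) + (2 * c) • f := by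
    have := congrArg derivative hf
    simp only [derivative_mul, derivative_sub, derivative_X_sq, derivative_one,
      derivative_ofNat, derivative_natCast, derivative_X, map_ofNat] at this
    simp only [Function.iterate_succ, Function.iterate_zero, Function.comp_apply, id, nsmul_eq_mul]
    push_cast
    linear_combination this
  have hg := congrArg (derivative^[c]) hf'
  simp only [iterate_map_add, iterate_map_nsmul, iterate_derivative_derivative_mul_X_sq,
    iterate_derivative_derivative_mul_X, ← Function.iterate_add_apply] at hg
  set g := derivative^[c] f
  have hg1 : derivative^[c + 1] f = derivative g := Function.iterate_succ_apply' _ _ _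
  have hg2 : derivative^[c + 2] f = derivative^[2] g := by
    rw [add_comm, Function.iterate_add_apply]
  have hc : ((c * (c - 1) : ℕ) : ℝ[X]) = c * c - c := by
    rcases c with _ | c <;> simp; ring
  rw [hg1, hg2] at hg
  simp only [nsmul_eq_mul, hc, Nat.cast_mul, Nat.cast_ofNat] at hg
  simp only [legendrePoly, iterate_derivative_C_mul, derivative_C_mul]
  linear_combination C (1 / (2 ^ c * (c.factorial : ℝ))) * hg

noncomputable def liouvilleLegendre (c : ℕ) (θ : ℝ) : ℝ :=
  √(sin θ) * (legendrePoly c).eval (cos θ)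

noncomputable def liouvilleLegendreDeriv (c : ℕ) (θ : ℝ) : ℝ :=
  cos θ / (2 * √(sin θ)) * (legendrePoly c).eval (cos θ)
    - √(sin θ) * sin θ * (derivative (legendrePoly c)).eval (cos θ)

theorem hasDerivAt_sqrt_sin {θ : ℝ} (h : 0 < sin θ) :
    HasDerivAt (fun t => √(sin t)) (cos θ / (2 * √(sin θ))) θ :=
  (hasDerivAt_sin θ).sqrt h.ne'

theorem hasDerivAt_eval_cos (p : ℝ[X]) (θ : ℝ) :
    HasDerivAt (fun t => p.eval (cos t)) (-((derivative p).eval (cos θ) * sin θ)) θ :=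
  ((p.hasDerivAt (cos θ)).comp θ (hasDerivAt_cos θ)).congr_deriv (by ring)

theorem hasDerivAt_liouvilleLegendre (c : ℕ) {θ : ℝ} (h : 0 < sin θ) :
    HasDerivAt (liouvilleLegendre c) (liouvilleLegendreDeriv c θ) θ :=
  ((hasDerivAt_sqrt_sin h).mul (hasDerivAt_eval_cos (legendrePoly c) θ)).congr_deriv <| by
    rw [liouvilleLegendreDeriv]; ring

theorem hasDerivAt_liouvilleLegendreDeriv (c : ℕ) {θ : ℝ} (h : 0 < sin θ) :
    HasDerivAt (liouvilleLegendreDeriv c)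
      (-(((c : ℝ) + 1 / 2) ^ 2 + 1 / (4 * sin θ ^ 2)) * liouvilleLegendre c θ) θ := by
  have hode := congrArg (eval (cos θ)) (legendrePoly_ode c)
  simp only [eval_add, eval_mul, eval_sub, eval_pow, eval_X, eval_one, eval_ofNat, eval_natCast,
    Function.iterate_succ, Function.iterate_zero, Function.comp_apply, id] at hode
  have h1 := ((hasDerivAt_cos θ).div ((hasDerivAt_sqrt_sin h).const_mul 2)
    (by positivity)).mul (hasDerivAt_eval_cos (legendrePoly c) θ)
  have h2 := ((hasDerivAt_sqrt_sin h).mul (hasDerivAt_sin θ)).mul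
    (hasDerivAt_eval_cos (derivative (legendrePoly c)) θ)
  refine (h1.sub h2).congr_deriv ?_
  simp only [liouvilleLegendre, Pi.mul_apply, Pi.div_apply]
  have hs : 0 < √(sin θ) := sqrt_pos.mpr h
  have hpyth := sin_sq_add_cos_sq θ
  set s := √(sin θ)
  have hsin : sin θ = s ^ 2 := (sq_sqrt h.le).symm
  rw [hsin] at hpyth ⊢
  linear_combination (norm := (field_simp; ring)) -s * hode
    + (s * (derivative (derivative (legendrePoly c))).eval (cos θ)
      - (legendrePoly c).eval (cos θ) / (4 * s ^ 3)) * hpyth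

section SturmComparison

variable {u u' q : ℝ → ℝ} {a m : ℝ}

/-- Sturm comparison with the solution `sin (m (θ - a))` of `v'' = -m² v`, through the
Wronskian `u v' - u' v`. -/
theorem exists_nonpos_of_hasDerivAt_of_sq_le (hm : 0 < m)
    (hu : ∀ θ ∈ Icc a (a + π / m), HasDerivAt u (u' θ) θ)
    (hu' : ∀ θ ∈ Icc a (a + π / m), HasDerivAt u' (-q θ * u θ) θ)
    (hq : ∀ θ ∈ Icc a (a + π / m), m ^ 2 ≤ q θ) :
    ∃ θ ∈ Icc a (a + π / m), u θ ≤ 0 := by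
  by_contra! hpos
  set b := a + π / m
  have hab : a ≤ b := le_add_of_nonneg_right (div_pos pi_pos hm).le
  have hv : ∀ θ, HasDerivAt (fun t => sin (m * (t - a))) (cos (m * (θ - a)) * m) θ := fun θ =>
    (((hasDerivAt_id θ).sub_const a).const_mul m).sin.congr_deriv (by simp)
  have hv' : ∀ θ, HasDerivAt (fun t => cos (m * (t - a)) * m) (-sin (m * (θ - a)) * m * m) θ :=
    fun θ => ((((hasDerivAt_id θ).sub_const a).const_mul m).cos.mul_const m).congr_deriv
      (by simp)
  have hsin : ∀ θ ∈ Icc a b, 0 ≤ sin (m * (θ - a)) := fun θ hθ => by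
    apply sin_nonneg_of_nonneg_of_le_pi (by nlinarith [hθ.1])
    calc m * (θ - a) ≤ m * (π / m) := by gcongr; linarith [hθ.2]
      _ = π := by field_simp
  set W := fun θ => u θ * (cos (m * (θ - a)) * m) - u' θ * sin (m * (θ - a))
  have hW : ∀ θ ∈ Icc a b, HasDerivAt W ((q θ - m ^ 2) * (u θ * sin (m * (θ - a)))) θ :=
    fun θ hθ => (((hu θ hθ).mul (hv' θ)).sub ((hu' θ hθ).mul (hv θ))).congr_deriv (by ring)
  have hmono : MonotoneOn W (Icc a b) := by
    refine monotoneOn_of_hasDerivWithinAt_nonneg (convex_Icc a b)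
      (fun θ hθ => (hW θ hθ).continuousAt.continuousWithinAt)
      (fun θ hθ => (hW θ (interior_subset hθ)).hasDerivWithinAt) fun θ hθ => ?_
    have hθ := interior_subset hθ
    exact mul_nonneg (sub_nonneg.2 (hq θ hθ)) (mul_nonneg (hpos θ hθ).le (hsin θ hθ))
  have hWab := hmono (left_mem_Icc.2 hab) (right_mem_Icc.2 hab) hab
  have hmb : m * (b - a) = π := by simp only [b]; field_simp; ring
  simp only [W, sub_self, mul_zero, sin_zero, cos_zero, hmb, sin_pi, cos_pi] at hWab
  nlinarith [hpos a (left_mem_Icc.2 hab), hpos b (right_mem_Icc.2 hab)]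

theorem exists_zero_of_hasDerivAt_of_sq_le (hm : 0 < m)
    (hu : ∀ θ ∈ Icc a (a + π / m), HasDerivAt u (u' θ) θ)
    (hu' : ∀ θ ∈ Icc a (a + π / m), HasDerivAt u' (-q θ * u θ) θ)
    (hq : ∀ θ ∈ Icc a (a + π / m), m ^ 2 ≤ q θ) :
    ∃ θ ∈ Icc a (a + π / m), u θ = 0 := by
  have ha : a ∈ Icc a (a + π / m) := left_mem_Icc.2 (le_add_of_nonneg_right (by positivity))
  wlog hua : 0 ≤ u a generalizing u u'
  · obtain ⟨θ, hθ, h⟩ := this (u := -u) (u' := -u') (fun θ hθ => (hu θ hθ).neg)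
      (fun θ hθ => (hu' θ hθ).neg.congr_deriv (by simp)) (by simp; linarith)
    exact ⟨θ, hθ, neg_eq_zero.1 h⟩
  obtain ⟨θ, hθ, hθ0⟩ := exists_nonpos_of_hasDerivAt_of_sq_le hm hu hu' hq
  have hcont : ContinuousOn u (Icc a (a + π / m)) :=
    fun θ hθ => (hu θ hθ).continuousAt.continuousWithinAt
  exact isPreconnected_Icc.intermediate_value hθ ha hcont ⟨hθ0, hua⟩

end SturmComparison

section GapBounds

variable {θ : ℕ → ℝ} {c : ℕ} {d : ℝ}

theorem notMem_Ioo_of_strictAntiOn (hanti : StrictAntiOn θ (Icc 1 c)) {k j : ℕ}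
    (hk : 1 ≤ k) (hkc : k + 1 ≤ c) (hj : j ∈ Icc 1 c) : θ j ∉ Ioo (θ (k + 1)) (θ k) := by
  rintro ⟨hlt, hgt⟩
  have h1 := (hanti.lt_iff_gt ⟨by omega, hkc⟩ hj).1 hlt
  have h2 := (hanti.lt_iff_gt hj ⟨hk, by omega⟩).1 hgt
  omega

variable (hanti : StrictAntiOn θ (Icc 1 c)) (hmem : ∀ j ∈ Icc 1 c, θ j ∈ Icc 0 π)
  (hgap : ∀ a b, 0 ≤ a → b ≤ π → (∀ j ∈ Icc 1 c, θ j ∉ Ioo a b) → b - a ≤ d)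
include hanti hmem hgap

theorem pi_sub_mul_le_of_gap_le {k : ℕ} (hk : k ∈ Icc 1 c) : π - k * d ≤ θ k := by
  obtain ⟨hk1, hkc⟩ := hk
  induction k, hk1 using Nat.le_induction with
  | base =>
    have := hgap (θ 1) π (hmem 1 ⟨le_rfl, hkc⟩).1 le_rfl fun j hj hθj =>
      (hanti.antitoneOn ⟨le_rfl, hkc⟩ hj hj.1).not_gt hθj.1
    rw [Nat.cast_one]
    linarith
  | succ k hk1 ih =>
    have := hgap (θ (k + 1)) (θ k) (hmem (k + 1) ⟨by omega, hkc⟩).1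
      (hmem k ⟨hk1, by omega⟩).2 fun j hj => notMem_Ioo_of_strictAntiOn hanti hk1 hkc hj
    push_cast
    linarith [ih (by omega)]

theorem le_mul_of_gap_le {k : ℕ} (hk : k ∈ Icc 1 c) : θ k ≤ (c + 1 - k) * d := by
  obtain ⟨hk1, hkc⟩ := hk
  induction hi : c - k generalizing k with
  | zero =>
    obtain rfl : k = c := by omega
    have := hgap 0 (θ k) le_rfl (hmem k ⟨hk1, le_rfl⟩).2 fun j hj hθj =>
      (hanti.antitoneOn hj ⟨hk1, le_rfl⟩ hj.2).not_gt hθj.2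
    linarith
  | succ i ih =>
    have := hgap (θ (k + 1)) (θ k) (hmem (k + 1) ⟨by omega, by omega⟩).1
      (hmem k ⟨hk1, hkc⟩).2 fun j hj => notMem_Ioo_of_strictAntiOn hanti hk1 (by omega) hj
    have := ih (k := k + 1) (by omega) (by omega) (by omega)
    push_cast at this
    linarith

end GapBounds

theorem exists_legendreP_cos_eq_zero (c : ℕ) {a : ℝ} (ha : 0 < a)
    (hb : a + π / (c + 1 / 2) < π) : ∃ θ ∈ Icc a (a + π / (c + 1 / 2)), legendreP c (cos θ) = 0 := by
  have hsin : ∀ θ ∈ Icc a (a + π / (c + 1 / 2)), 0 < sin θ := fun θ hθ =>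
    sin_pos_of_pos_of_lt_pi (ha.trans_le hθ.1) (hθ.2.trans_lt hb)
  obtain ⟨θ, hθ, hzero⟩ := exists_zero_of_hasDerivAt_of_sq_le (by positivity)
    (fun θ hθ => hasDerivAt_liouvilleLegendre c (hsin θ hθ))
    (fun θ hθ => hasDerivAt_liouvilleLegendreDeriv c (hsin θ hθ))
    (fun θ _ => le_add_of_nonneg_right (by positivity))
  refine ⟨θ, hθ, ?_⟩
  rw [legendreP_eq_eval]
  exact (mul_eq_zero.1 hzero).resolve_left (sqrt_pos.2 (hsin θ hθ)).ne'

section LegendreRoots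

variable {x : ℕ → ℕ → ℝ} {c : ℕ}

theorem strictAntiOn_arccos_legendreRoot (hx : IsLegendreRootSystem x) :
    StrictAntiOn (fun j => arccos (x j c)) (Icc 1 c) := by
  rintro i ⟨hi1, hic⟩ j ⟨hj1, hjc⟩ hij
  have hc : 1 ≤ c := hi1.trans hic
  have hxi := ((hx c hc).1 i hi1 hic).1
  have hxj := ((hx c hc).1 j hj1 hjc).1
  exact strictAntiOn_arccos ⟨hxi.1.le, hxi.2.le⟩ ⟨hxj.1.le, hxj.2.le⟩
    ((hx c hc).2.1 i j hi1 hij hjc)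

theorem sub_le_of_forall_arccos_legendreRoot_notMem (hx : IsLegendreRootSystem x) (hc : 1 ≤ c)
    {a b : ℝ} (ha : 0 ≤ a) (hb : b ≤ π) (hgap : ∀ j ∈ Icc 1 c, arccos (x j c) ∉ Ioo a b) :
    b - a ≤ π / (c + 1 / 2) := by
  by_contra! hlong
  set δ := (b - a - π / (c + 1 / 2)) / 2
  have hδ : 2 * δ = b - a - π / (c + 1 / 2) := by ring
  obtain ⟨θ, hθ, hroot⟩ := exists_legendreP_cos_eq_zero c (a := a + δ) (by positivity)
    (by linarith)
  have hθab : θ ∈ Ioo a b := ⟨by linarith [hθ.1], by linarith [hθ.2]⟩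
  have hθπ : θ ∈ Ioo 0 π := ⟨ha.trans_lt hθab.1, hθab.2.trans_le hb⟩
  have hcos1 := strictAntiOn_cos ⟨le_rfl, pi_pos.le⟩ (Ioo_subset_Icc_self hθπ) hθπ.1
  have hcos2 := strictAntiOn_cos (Ioo_subset_Icc_self hθπ) ⟨pi_pos.le, le_rfl⟩ hθπ.2
  rw [cos_zero] at hcos1
  rw [cos_pi] at hcos2
  obtain ⟨j, hj1, hjc, hxj⟩ := (hx c hc).2.2 (cos θ) ⟨hcos2, hcos1⟩ hroot
  refine hgap j ⟨hj1, hjc⟩ ?_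
  rwa [hxj, arccos_cos hθπ.1.le hθπ.2.le]

theorem abs_arccos_legendreRoot_sub_lt (hx : IsLegendreRootSystem x) {k : ℕ} (hk : k ∈ Icc 1 c) :
    |arccos (x k c) - (π - π * k / c)| < π / c := by
  have hc : 1 ≤ c := hk.1.trans hk.2
  have hanti := strictAntiOn_arccos_legendreRoot (c := c) hx
  have hmem : ∀ j ∈ Icc 1 c, arccos (x j c) ∈ Icc 0 π := fun j _ => ⟨arccos_nonneg _, arccos_le_pi _⟩
  have hgap := fun a b => sub_le_of_forall_arccos_legendreRoot_notMem hx hc (a := a) (b := b)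
  have hlow := pi_sub_mul_le_of_gap_le hanti hmem hgap hk
  have hup := le_mul_of_gap_le hanti hmem hgap hk
  have hc0 : (0 : ℝ) < c := by exact_mod_cast hc
  have hkc : (k : ℝ) ≤ c := by exact_mod_cast hk.2
  rw [abs_lt]
  constructor
  · have : k * (π / (c + 1 / 2)) ≤ π * k / c :=
      calc k * (π / (c + 1 / 2)) = π * k / (c + 1 / 2) := by ring
        _ ≤ π * k / c := div_le_div_of_nonneg_left (by positivity) hc0 (by linarith)
    have : 0 < π / c := by positivity
    linarith
  · have : (c + 1 - k) * (π / (c + 1 / 2)) - (π - π * k / c) - π / c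
        = -(π * (c + 1 - k) / (2 * c * (c + 1 / 2))) := by
      field_simp; ring
    have : 0 < π * (c + 1 - k) / (2 * c * (c + 1 / 2)) := by
      apply div_pos (mul_pos pi_pos (by linarith)) (by positivity)
    linarith

end LegendreRoots

theorem theta_asymptotics_general (x : ℕ → ℕ → ℝ) (hx : IsLegendreRootSystem x)
    (α : ℝ) (hα0 : 0 < α) (ε : ℝ) (hε : 0 < ε) :
    ∃ C : ℕ, ∀ c : ℕ, C ≤ c → ∀ k : ℕ,
      α * (c : ℝ) < (k : ℝ) → (k : ℝ) < (1 - α) * (c : ℝ) →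
      |Real.arccos (x k c) - (π - π * (k : ℝ) / (c : ℝ))| < ε := by
  obtain ⟨C, hC⟩ := exists_nat_gt (π / ε)
  refine ⟨C, fun c hc k hαk hkα => ?_⟩
  have hcε : π / ε < c := hC.trans_le (by exact_mod_cast hc)
  have hc0 : (0 : ℝ) < c := (div_pos pi_pos hε).trans hcε
  have hk : k ∈ Icc 1 c := by
    constructor
    · exact_mod_cast (mul_pos hα0 hc0).trans hαk
    · exact_mod_cast (show (k : ℝ) ≤ c by nlinarith)
  calc |arccos (x k c) - (π - π * k / c)| < π / c := abs_arccos_legendreRoot_sub_lt hx hk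
    _ < ε := by rwa [div_lt_iff₀ hc0, ← div_lt_iff₀' hε]

/-- `θ_{k,c} = arccos x_{k,c} = π − πk/c + o(1)` as `c → ∞`, uniformly over `k`
with `αc < k < (1−α)c`. -/
theorem theta_asymptotics (x : ℕ → ℕ → ℝ) (hx : IsLegendreRootSystem x)
    (α : ℝ) (hα0 : 0 < α) (hα1 : α < 1 / 2) (ε : ℝ) (hε : 0 < ε) :
    ∃ C : ℕ, ∀ c : ℕ, C ≤ c → ∀ k : ℕ,
      α * (c : ℝ) < (k : ℝ) → (k : ℝ) < (1 - α) * (c : ℝ) →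
      |Real.arccos (x k c) - (π - π * (k : ℝ) / (c : ℝ))| < ε :=
  theta_asymptotics_general x hx α hα0 ε hε
end

section
/- For every positive integer m, the (2m)-th derivative of the function f(x) = (1 − x²)^{−1/2} is strictly positive at every point x of the open interval (−1, 1). -/
/-!
Since `f` is even, it suffices to take `0 ≤ x`. Differentiating `(1 - x²) f' = x f` repeatedly
gives `(1 - x²) f⁽ⁿ⁺¹⁾ = (2n + 1) x f⁽ⁿ⁾ + n² f⁽ⁿ⁻¹⁾`, whose coefficients are nonnegative for
`0 ≤ x < 1`. Starting from `f > 0`, all derivatives are then nonnegative there, and the term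
`(2m + 1)² f⁽²ᵐ⁾` makes each even one strictly positive.
-/

open Real Set Filter Topology
open scoped ContDiff

section IteratedDeriv

variable {𝕜 : Type*} [NontriviallyNormedField 𝕜] {F : Type*} [NormedAddCommGroup F]
  [NormedSpace 𝕜 F]

theorem ContDiffOn.hasDerivAt_iteratedDeriv {f : 𝕜 → F} {U : Set 𝕜} {x : 𝕜}
    (hf : ContDiffOn 𝕜 ∞ f U) (hU : IsOpen U) (hx : x ∈ U) (n : ℕ) :
    HasDerivAt (iteratedDeriv n f) (iteratedDeriv (n + 1) f x) x := by
  have hwithin : DifferentiableAt 𝕜 (iteratedDerivWithin n f U) x :=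
    ((hf.differentiableOn_iteratedDerivWithin (mod_cast ENat.natCast_lt_top n)
      hU.uniqueDiffOn) x hx).differentiableAt (hU.mem_nhds hx)
  have heq : iteratedDerivWithin n f U =ᶠ[𝓝 x] iteratedDeriv n f :=
    eventually_of_mem (hU.mem_nhds hx) fun y hy => iteratedDerivWithin_of_isOpen hU hy
  rw [iteratedDeriv_succ]
  exact (heq.differentiableAt_iff.mp hwithin).hasDerivAt

theorem Function.Even.iteratedDeriv_neg {f : 𝕜 → F} (hf : Function.Even f) {n : ℕ}
    (hn : Even n) (x : 𝕜) : iteratedDeriv n f (-x) = iteratedDeriv n f x := by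
  have h := iteratedDeriv_comp_neg n f x
  rwa [show (fun y => f (-y)) = f from funext hf, hn.neg_one_pow, one_smul, eq_comm] at h

end IteratedDeriv

-- For `n = 0` the truncated index `n - 1` is harmless: its coefficient `n ^ 2` vanishes.
theorem iteratedDeriv_recurrence_of_ode {f : ℝ → ℝ} {U : Set ℝ} (hf : ContDiffOn ℝ ∞ f U)
    (hU : IsOpen U) (hode : ∀ x ∈ U, (1 - x ^ 2) * deriv f x = x * f x) (n : ℕ) :
    ∀ x ∈ U, (1 - x ^ 2) * iteratedDeriv (n + 1) f x =
      (2 * n + 1) * x * iteratedDeriv n f x + n ^ 2 * iteratedDeriv (n - 1) f x := by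
  induction n with
  | zero => simpa using hode
  | succ n ih =>
    intro x hx
    have hD := hf.hasDerivAt_iteratedDeriv hU hx
    have hlast : (n : ℝ) ^ 2 * iteratedDeriv (n - 1 + 1) f x = n ^ 2 * iteratedDeriv n f x := by
      rcases n with _ | n <;> simp
    let G : ℝ → ℝ := fun y => (1 - y ^ 2) * iteratedDeriv (n + 1) f y
      - ((2 * n + 1) * y * iteratedDeriv n f y + n ^ 2 * iteratedDeriv (n - 1) f y)
    have hsq : HasDerivAt (fun y : ℝ => 1 - y ^ 2) (-(2 * x)) x := by
      simpa using (hasDerivAt_pow 2 x).const_sub 1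
    have hG : HasDerivAt G
        ((-(2 * x) * iteratedDeriv (n + 1) f x + (1 - x ^ 2) * iteratedDeriv (n + 2) f x)
          - ((2 * n + 1) * 1 * iteratedDeriv n f x
              + (2 * n + 1) * x * iteratedDeriv (n + 1) f x
            + n ^ 2 * iteratedDeriv (n - 1 + 1) f x)) x :=
      (hsq.mul (hD (n + 1))).sub ((((hasDerivAt_id x).const_mul _).mul (hD n)).add
        ((hD (n - 1)).const_mul _))
    have hG0 : G =ᶠ[𝓝 x] fun _ => 0 :=
      eventually_of_mem (hU.mem_nhds hx) fun y hy => sub_eq_zero.mpr (ih y hy)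
    have h := hG.deriv.symm.trans (hG0.deriv_eq.trans (deriv_const x 0))
    rw [hlast] at h
    push_cast
    linear_combination h

section Recurrence

variable {a : ℕ → ℝ} {x : ℝ}

theorem nonneg_of_recurrence (hx : 0 ≤ x) (hx₁ : 0 < 1 - x ^ 2) (ha₀ : 0 ≤ a 0)
    (hrec : ∀ n : ℕ, (1 - x ^ 2) * a (n + 1) = (2 * n + 1) * x * a n + n ^ 2 * a (n - 1))
    (n : ℕ) : 0 ≤ a n := by
  induction n using Nat.strong_induction_on with
  | _ n ih =>
    rcases n with _ | n
    · exact ha₀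
    · have hsum : 0 ≤ (1 - x ^ 2) * a (n + 1) := by
        rw [hrec]
        have := ih n (by omega)
        have := ih (n - 1) (by omega)
        positivity
      exact (mul_nonneg_iff_of_pos_left hx₁).mp hsum

theorem even_pos_of_recurrence (hx : 0 ≤ x) (hx₁ : 0 < 1 - x ^ 2) (ha₀ : 0 < a 0)
    (hrec : ∀ n : ℕ, (1 - x ^ 2) * a (n + 1) = (2 * n + 1) * x * a n + n ^ 2 * a (n - 1))
    (m : ℕ) : 0 < a (2 * m) := by
  induction m with
  | zero => exact ha₀
  | succ m ih =>
    have hodd := nonneg_of_recurrence hx hx₁ ha₀.le hrec (2 * m + 1)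
    have h := hrec (2 * m + 1)
    simp only [Nat.add_sub_cancel] at h
    refine (mul_pos_iff_of_pos_left hx₁).mp ?_
    rw [show 2 * (m + 1) = 2 * m + 1 + 1 by ring, h]
    positivity

end Recurrence

theorem one_sub_sq_pos_of_mem_Ioo {x : ℝ} (hx : x ∈ Ioo (-1 : ℝ) 1) : 0 < 1 - x ^ 2 := by
  nlinarith [hx.1, hx.2]

theorem contDiffOn_one_sub_sq_rpow (p : ℝ) :
    ContDiffOn ℝ ∞ (fun t : ℝ => (1 - t ^ 2) ^ p) (Ioo (-1) 1) :=
  (contDiffOn_const.sub (contDiffOn_id.pow 2)).rpow_const_of_ne fun _ hx =>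
    (one_sub_sq_pos_of_mem_Ioo hx).ne'

theorem one_sub_sq_mul_deriv_one_sub_sq_rpow (p : ℝ) {x : ℝ} (hx : x ∈ Ioo (-1 : ℝ) 1) :
    (1 - x ^ 2) * deriv (fun t : ℝ => (1 - t ^ 2) ^ p) x = -2 * p * x * (1 - x ^ 2) ^ p := by
  have hpos := one_sub_sq_pos_of_mem_Ioo hx
  have hsq : HasDerivAt (fun t : ℝ => 1 - t ^ 2) (-(2 * x)) x := by
    simpa using (hasDerivAt_pow 2 x).const_sub 1
  rw [(hsq.rpow_const (p := p) (Or.inl hpos.ne')).deriv, rpow_sub_one hpos.ne']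
  field_simp

theorem even_iteratedDeriv_pos_general (m : ℕ) (x : ℝ)
    (hx : x ∈ Set.Ioo (-1 : ℝ) 1) :
    0 < iteratedDeriv (2 * m) (fun t : ℝ => (1 - t ^ 2) ^ (-(1 : ℝ) / 2)) x := by
  set f := fun t : ℝ => (1 - t ^ 2) ^ (-(1 : ℝ) / 2)
  have hode : ∀ y ∈ Ioo (-1 : ℝ) 1, (1 - y ^ 2) * deriv f y = y * f y := fun y hy => by
    rw [one_sub_sq_mul_deriv_one_sub_sq_rpow _ hy]
    ring
  have hrec := iteratedDeriv_recurrence_of_ode (contDiffOn_one_sub_sq_rpow _) isOpen_Ioo hode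
  have hf_even : Function.Even f := fun t => by simp only [f, neg_sq]
  have habs : |x| ∈ Ioo (-1 : ℝ) 1 := ⟨by linarith [abs_nonneg x], abs_lt.mpr hx⟩
  have hsymm : iteratedDeriv (2 * m) f x = iteratedDeriv (2 * m) f |x| := by
    rcases abs_choice x with h | h <;> rw [h]
    exact (hf_even.iteratedDeriv_neg (even_two_mul m) x).symm
  have hpos := one_sub_sq_pos_of_mem_Ioo habs
  rw [hsymm]
  exact even_pos_of_recurrence (a := fun n => iteratedDeriv n f |x|) (abs_nonneg x) hpos
    (rpow_pos_of_pos hpos _) (fun n => hrec n |x| habs) m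

/-- For every positive integer `m`, the `(2m)`-th derivative of
`f(x) = (1 − x²)^{−1/2}` is strictly positive at every `x ∈ (−1, 1)`. -/
theorem even_iteratedDeriv_pos (m : ℕ) (hm : 1 ≤ m) (x : ℝ)
    (hx : x ∈ Set.Ioo (-1 : ℝ) 1) :
    0 < iteratedDeriv (2 * m) (fun t : ℝ => (1 - t ^ 2) ^ (-(1 : ℝ) / 2)) x :=
  even_iteratedDeriv_pos_general m x hx
end
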